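/- arXiv:1510.02575 — 6 statements merged into one kernel-verified Lean document; each statement's English description precedes it below -/
import Mathlib

section
/- Let q be an odd prime power, φ the quadratic character of F_q, and A any multiplicative character. Then the Gauss sums satisfy the duplication formula g(A)·g(φA) = g(A²)·g(φ)·A(4)⁻¹, i.e., g(A)g(φA) = g(A²)g(φ)·Ā(4) where Ā denotes the inverse character. -/
/-!
The substitution `x = (1 + s) / 2` turns `J(A, A) = ∑ A(x(1 - x))` into `Ā(4) ∑ A(1 - s²)`, and
counting square roots with the quadratic character rewrites this as `Ā(4) J(φ, A)`. Expressing
both Jacobi sums through Gauss sums, `g(A)² = g(A²) J(A, A)` and `g(A) g(φ) = g(φA) J(φ, A)`, and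
cancelling `g(A) ≠ 0` gives the formula; the cases `A² = 1`, i.e. `A ∈ {1, φ}`, are direct.
-/

open scoped Classical
open Finset

namespace MulChar

variable {M R : Type*} [CommMonoid M] [CommRing R]

theorem apply_sq_eq_one_of_sq_eq_one {χ : MulChar M R} (hχ : χ ^ 2 = 1) {a : M} (ha : IsUnit a) :
    χ (a ^ 2) = 1 := by
  rw [map_pow, ← pow_apply' χ two_ne_zero, hχ, one_apply ha]

theorem eq_of_sq_eq_one_of_ne_one [Fintype M] [DecidableEq M] [IsCyclic Mˣ] [IsDomain R]
    {χ χ' : MulChar M R} (hχ : χ ^ 2 = 1) (hχ' : χ' ^ 2 = 1) (hχ1 : χ ≠ 1) (hχ'1 : χ' ≠ 1) :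
    χ = χ' := by
  let e := equiv_rootsOfUnity M R
  have eq_neg_one (η : MulChar M R) (hη : η ^ 2 = 1) (hη1 : η ≠ 1) :
      ((e η : Rˣ) : R) = -1 := by
    have hsq : ((e η : Rˣ) : R) ^ 2 = 1 := by
      rw [← Units.val_pow_eq_pow_val, ← Subgroup.coe_pow, ← map_pow, hη, map_one]; rfl
    have hne : ((e η : Rˣ) : R) ≠ 1 := by
      rw [Ne, Units.val_eq_one, OneMemClass.coe_eq_one, map_eq_one_iff _ e.injective]
      exact hη1
    exact (sq_eq_one_iff.mp hsq).resolve_left hne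
  refine e.injective (Subtype.ext (Units.ext ?_))
  rw [eq_neg_one χ hχ hχ1, eq_neg_one χ' hχ' hχ'1]

end MulChar

section QuadraticChar

variable {F : Type*} [Field F] [Fintype F] [DecidableEq F] {R : Type*} [CommRing R]

theorem eq_quadraticChar_ringHomComp_of_sq_eq_one [IsDomain R] [CharZero R] (hF : ringChar F ≠ 2)
    {φ : MulChar F R} (hφ2 : φ ^ 2 = 1) (hφ : φ ≠ 1) :
    φ = (quadraticChar F).ringHomComp (Int.castRingHom R) :=
  MulChar.eq_of_sq_eq_one_of_ne_one hφ2
    (by rw [MulChar.ringHomComp_pow, (quadraticChar_isQuadratic F).sq_eq_one,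
      MulChar.ringHomComp_one])
    hφ ((MulChar.ringHomComp_ne_one_iff Int.cast_injective).mpr (quadraticChar_ne_one hF))

theorem sum_comp_sq_eq_sum_one_add_quadraticChar_mul (hF : ringChar F ≠ 2) (f : F → R) :
    ∑ s : F, f (s ^ 2) = ∑ u : F, (1 + (quadraticChar F u : R)) * f u := by
  rw [← sum_fiberwise univ (· ^ 2) (f <| · ^ 2)]
  refine Fintype.sum_congr _ _ fun u => ?_
  have hcard : (#{s : F | s ^ 2 = u} : R) = 1 + quadraticChar F u := by
    have := quadraticChar_card_sqrts hF u
    rw [Set.toFinset_ofPred] at this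
    rw [add_comm]; exact_mod_cast congrArg (Int.cast (R := R)) this
  rw [← hcard, ← nsmul_eq_mul, ← sum_const]
  exact sum_congr rfl fun s hs => by rw [(mem_filter.mp hs).2]

theorem jacobiSum_self [IsDomain R] (hF : ringChar F ≠ 2) {χ : MulChar F R} (hχ : χ ≠ 1) :
    jacobiSum χ χ = χ⁻¹ 4 * jacobiSum ((quadraticChar F).ringHomComp (Int.castRingHom R)) χ := by
  have h2 : (2 : F) ≠ 0 := Ring.two_ne_zero hF
  have h4 : (4 : F) ≠ 0 := by
    rw [show (4 : F) = 2 ^ 2 by norm_num]; exact pow_ne_zero 2 h2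
  have half_bij : Function.Bijective fun s : F => (1 + s) / 2 :=
    Finite.injective_iff_bijective.mp fun a b h => by simpa [h2] using h
  calc jacobiSum χ χ = ∑ x : F, χ (x * (1 - x)) := by simp only [jacobiSum, map_mul]
    _ = ∑ s : F, χ (4⁻¹ * (1 - s ^ 2)) :=
      (Fintype.sum_bijective _ half_bij _ _ fun s => by congr 1; field_simp; ring).symm
    _ = χ⁻¹ 4 * ∑ s : F, χ (1 - s ^ 2) := by
      simp only [mul_sum, map_mul, MulChar.inv_apply']
    _ = χ⁻¹ 4 * ∑ u : F, (1 + (quadraticChar F u : R)) * χ (1 - u) := by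
      rw [sum_comp_sq_eq_sum_one_add_quadraticChar_mul hF (fun u => χ (1 - u))]
    _ = χ⁻¹ 4 * (∑ u : F, χ (1 - u) +
          jacobiSum ((quadraticChar F).ringHomComp (Int.castRingHom R)) χ) := by
      simp only [jacobiSum, add_mul, one_mul, sum_add_distrib, MulChar.ringHomComp_apply,
        eq_intCast]
    _ = χ⁻¹ 4 * jacobiSum ((quadraticChar F).ringHomComp (Int.castRingHom R)) χ := by
      rw [Fintype.sum_equiv (Equiv.subLeft 1) (fun u => χ (1 - u)) χ fun _ => rfl,
        MulChar.sum_eq_zero_of_ne_one hχ, zero_add]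

end QuadraticChar

theorem gaussSum_duplication_general
    {F : Type*} [Field F] [Fintype F]
    (hodd : Odd (Fintype.card F))
    (φ : MulChar F ℂ) (hφ2 : φ ^ 2 = 1) (hφ : φ ≠ 1)
    (ψ : AddChar F ℂ) (hψ : ψ ≠ 1) (A : MulChar F ℂ) :
    gaussSum A ψ * gaussSum (φ * A) ψ =
      gaussSum (A ^ 2) ψ * gaussSum φ ψ * A⁻¹ 4 := by
  have hF : ringChar F ≠ 2 := fun h => by
    simpa [Nat.odd_iff.mp hodd] using FiniteField.even_card_iff_char_two.mp h
  by_cases hA2 : A ^ 2 = 1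
  · have h4 : A⁻¹ 4 = 1 := by
      rw [show (4 : F) = 2 ^ 2 by norm_num]
      exact MulChar.apply_sq_eq_one_of_sq_eq_one (by rw [inv_pow, hA2, inv_one])
        (Ring.two_ne_zero hF).isUnit
    by_cases hA1 : A = 1
    · rw [h4, hA1]
      simp only [one_pow, mul_one]
    · obtain rfl := MulChar.eq_of_sq_eq_one_of_ne_one hA2 hφ2 hA1 hφ
      rw [hA2, h4, ← sq, hA2]; ring
  have hA1 : A ≠ 1 := fun h => hA2 (by rw [h, one_pow])
  have hφA : φ * A ≠ 1 := fun h => hA2 (by rw [eq_inv_of_mul_eq_one_right h, inv_pow, hφ2, inv_one])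
  have hgA : gaussSum A ψ ≠ 0 := gaussSum_ne_zero_of_nontrivial
    (Nat.cast_ne_zero.mpr Fintype.card_ne_zero) hA1 (AddChar.IsPrimitive.of_ne_one hψ)
  have hJAA := jacobiSum_mul_nontrivial (sq A ▸ hA2) ψ
  have hJφA := jacobiSum_mul_nontrivial hφA ψ
  rw [jacobiSum_self hF hA1, ← eq_quadraticChar_ringHomComp_of_sq_eq_one hF hφ2 hφ, ← sq] at hJAA
  apply mul_right_cancel₀ hgA
  linear_combination (gaussSum (A ^ 2) ψ * A⁻¹ 4) * hJφA - gaussSum (φ * A) ψ * hJAA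

/-- Duplication (Hasse–Davenport, m = 2): `g(A)·g(φA) = g(A²)·g(φ)·Ā(4)`. -/
theorem gaussSum_duplication
    {F : Type*} [Field F] [Fintype F] [DecidableEq F]
    (hodd : Odd (Fintype.card F))
    (φ : MulChar F ℂ) (hφ2 : φ ^ 2 = 1) (hφ : φ ≠ 1)
    (ψ : AddChar F ℂ) (hψ : ψ ≠ 1) (A : MulChar F ℂ) :
    gaussSum A ψ * gaussSum (φ * A) ψ =
      gaussSum (A ^ 2) ψ * gaussSum φ ψ * A⁻¹ 4 :=
  gaussSum_duplication_general hodd φ hφ2 hφ ψ hψ A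
end

section
/- Let q be an odd prime power, φ the quadratic character of F_q, and A a nontrivial multiplicative character. Then J(A,A) = Ā(4)·J(A,φ), where Ā = A⁻¹ and J denotes the Jacobi sum. -/
open scoped Classical
open Finset

section Aux

variable {F : Type*} [Field F] [Fintype F] [DecidableEq F]

omit [DecidableEq F] in
private lemma char_ne_two_of_odd (hodd : Odd (Fintype.card F)) : ringChar F ≠ 2 := by
  intro h
  have h2 := FiniteField.even_card_of_char_two h
  rw [Nat.odd_iff] at hodd
  omega

/-- A nontrivial character with `φ² = 1` agrees with the quadratic character. -/
private lemma phi_eq_quadChar (hodd : Odd (Fintype.card F))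
    (φ : MulChar F ℂ) (hφ2 : φ ^ 2 = 1) (hφ : φ ≠ 1) (t : F) :
    φ t = ((quadraticChar F t : ℤ) : ℂ) := by
  have hch : ringChar F ≠ 2 := char_ne_two_of_odd hodd
  have hsq : ∀ s : F, s ≠ 0 → φ s * φ s = 1 := by
    intro s hs
    have : (φ ^ 2) s = (1 : MulChar F ℂ) s := by rw [hφ2]
    rwa [sq, MulChar.mul_apply, MulChar.one_apply (isUnit_iff_ne_zero.mpr hs)] at this
  rcases eq_or_ne t 0 with rfl | ht
  · simp [MulChar.map_zero]
  rcases mul_self_eq_one_iff.mp (hsq t ht) with h1 | hneg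
  ·
    by_cases hsqr : IsSquare t
    · rw [(quadraticChar_one_iff_isSquare ht).mpr hsqr, h1]; norm_num
    · exfalso
      apply hφ
      apply MulChar.ext
      intro a
      rw [MulChar.one_apply_coe]
      by_cases ha : IsSquare (a : F)
      · obtain ⟨s, hs⟩ := ha
        have hs0 : s ≠ 0 := by
          intro h; rw [h, mul_zero] at hs
          exact a.ne_zero hs
        rw [hs, map_mul]
        exact hsq s hs0
      · -- a * t⁻¹ is a square
        have ha0 : (a : F) ≠ 0 := a.ne_zero
        have hqt : quadraticChar F t = -1 := quadraticChar_neg_one_iff_not_isSquare.mpr hsqr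
        have hqti : quadraticChar F t⁻¹ = -1 := by
          have h := map_mul (quadraticChar F) t t⁻¹
          rw [mul_inv_cancel₀ ht, map_one, hqt] at h
          linarith
        have hq : quadraticChar F ((a : F) * t⁻¹) = 1 := by
          rw [map_mul, quadraticChar_neg_one_iff_not_isSquare.mpr ha, hqti]
          norm_num
        have hne : (a : F) * t⁻¹ ≠ 0 := mul_ne_zero ha0 (inv_ne_zero ht)
        obtain ⟨s, hs⟩ := (quadraticChar_one_iff_isSquare hne).mp hq
        have hs0 : s ≠ 0 := by
          intro h'; rw [h', mul_zero] at hs; exact hne hs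
        have hxa : (a : F) = s * s * t := by
          field_simp at hs ⊢
          linear_combination hs
        rw [hxa, map_mul, map_mul, h1, mul_one]
        exact hsq s hs0
  · rcases quadraticChar_dichotomy ht with h | h
    · exfalso
      obtain ⟨s, hs⟩ := (quadraticChar_one_iff_isSquare ht).mp h
      have hs0 : s ≠ 0 := by
        intro h'; rw [h', mul_zero] at hs; exact ht hs
      have : φ t = 1 := by rw [hs, map_mul]; exact hsq s hs0
      rw [this] at hneg
      norm_num at hneg
    · rw [h, hneg]; norm_num

end Aux

/-- `J(A,A) = Ā(4)·J(A,φ)` for `A` nontrivial, `φ` the quadratic character. -/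
theorem jacobiSum_self_eq
    {F : Type*} [Field F] [Fintype F] [DecidableEq F]
    (hodd : Odd (Fintype.card F))
    (φ : MulChar F ℂ) (hφ2 : φ ^ 2 = 1) (hφ : φ ≠ 1)
    (A : MulChar F ℂ) (hA : A ≠ 1) :
    (∑ x : F, A x * A (1 - x)) = A⁻¹ 4 * ∑ x : F, A x * φ (1 - x) := by
  have hch : ringChar F ≠ 2 := char_ne_two_of_odd hodd
  have h2 : (2 : F) ≠ 0 := Ring.two_ne_zero hch
  have h4 : (4 : F) ≠ 0 := by
    intro h
    have h22 : (2 : F) * 2 = 0 := by rw [← h]; norm_num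
    exact h2 (by rcases mul_eq_zero.mp h22 with h' | h' <;> exact h')
  -- counting square roots
  have hcount : ∀ t : F, ((univ.filter (fun u : F => u ^ 2 = t)).card : ℂ) = 1 + φ t := by
    intro t
    have hc := quadraticChar_card_sqrts hch t
    have hset : {x : F | x ^ 2 = t}.toFinset = univ.filter (fun u : F => u ^ 2 = t) := by
      ext x; simp
    rw [hset] at hc
    calc ((univ.filter (fun u : F => u ^ 2 = t)).card : ℂ)
        = (((univ.filter (fun u : F => u ^ 2 = t)).card : ℤ) : ℂ) := by push_cast; ring
      _ = ((quadraticChar F t + 1 : ℤ) : ℂ) := by rw [hc]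
      _ = 1 + φ t := by
          rw [phi_eq_quadChar hodd φ hφ2 hφ t]; push_cast; ring
  -- Step 1: LHS = A⁻¹ 4 * ∑ u, A (1 - u ^ 2)
  have step1 : (∑ x : F, A x * A (1 - x)) = A⁻¹ 4 * ∑ u : F, A (1 - u ^ 2) := by
    have hmm : ∀ x : F, A x * A (1 - x) = A (x * (1 - x)) := fun x => (map_mul A _ _).symm
    simp_rw [hmm]
    rw [Finset.mul_sum]
    apply Fintype.sum_equiv ((Equiv.mulLeft₀ (2 : F) h2).trans (Equiv.subRight (1 : F)))
    intro x
    simp only [Equiv.trans_apply, Equiv.subRight_apply, Equiv.mulLeft₀_apply]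
    rw [MulChar.inv_apply' A, ← map_mul]
    congr 1
    field_simp
    ring
  -- Step 2: ∑ u, A (1 - u ^ 2) = ∑ t, (1 + φ t) * A (1 - t)
  have step2 : (∑ u : F, A (1 - u ^ 2)) = ∑ t : F, (1 + φ t) * A (1 - t) := by
    have huv : ∀ u : F, A (1 - u ^ 2) = ∑ t : F, if u ^ 2 = t then A (1 - t) else 0 := by
      intro u
      rw [Finset.sum_ite_eq univ (u ^ 2) (fun t => A (1 - t))]
      simp
    simp_rw [huv]
    rw [Finset.sum_comm]
    apply Finset.sum_congr rfl
    intro t _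
    rw [← Finset.sum_filter, Finset.sum_const, nsmul_eq_mul, hcount t]
  -- Step 3: split and evaluate
  have step3 : (∑ t : F, (1 + φ t) * A (1 - t)) = ∑ x : F, A x * φ (1 - x) := by
    simp_rw [add_mul, one_mul]
    rw [Finset.sum_add_distrib]
    have hz : (∑ t : F, A (1 - t)) = 0 := by
      have := Fintype.sum_equiv (Equiv.subLeft (1 : F)) (fun t : F => A (1 - t))
        (fun t : F => A t) (fun t => by simp)
      rw [this]
      exact A.sum_eq_zero_of_ne_one hA
    rw [hz, zero_add]
    exact Fintype.sum_equiv (Equiv.subLeft (1 : F)) _ _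
      (fun t => by simp [sub_sub_cancel, mul_comm])
  rw [step1, step2, step3]
end

section
/- Let ₂P₁[A,B;C;λ] := Σ_{y∈F_q} B(y)·(B⁻¹C)(1−y)·A⁻¹(1−λy). For any multiplicative characters A,B,C of F_q and any λ ∈ F_q: ₂P₁[A,B;C;λ] = B(−1)·₂P₁[A,B; A·B·C⁻¹; 1−λ]. -/
open scoped Classical

/-- The Jacobi sum `J(A,B) = Σ_{x∈F_q} A(x)·B(1−x)`. -/
noncomputable def jacobiS {F : Type*} [Field F] [Fintype F] (A B : MulChar F ℂ) : ℂ :=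
  ∑ x : F, A x * B (1 - x)

/-- The finite field period function
`₂P₁[A,B;C;λ] = Σ_{y∈F_q} B(y)·(B⁻¹C)(1−y)·A⁻¹(1−λy)`. -/
noncomputable def P2 {F : Type*} [Field F] [Fintype F]
    (A B C : MulChar F ℂ) (lam : F) : ℂ :=
  ∑ y : F, B y * (B⁻¹ * C) (1 - y) * A⁻¹ (1 - lam * y)

/-!
The substitution `y' = y / (y - 1)` is an involution of `F ∖ {1}`. Writing `u = y - 1`, we have
`1 - y = -u`, `1 - y' = -u⁻¹` and `1 - (1 - λ) y' = -u⁻¹ (1 - λ y)`; since `B⁻¹ · ABC⁻¹ = AC⁻¹`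
the `A`-factors at `-u⁻¹` cancel, turning each summand of `₂P₁[A,B;C;λ]` into `B(-1)` times the matching
summand of `₂P₁[A,B;ABC⁻¹;1-λ]`. The term `y = 1` vanishes on both sides.
-/

open Finset

lemma div_sub_one_ne_one {F : Type*} [Field F] (y : F) : y / (y - 1) ≠ 1 := by
  intro h
  by_cases hy : y - 1 = 0
  · rw [hy, div_zero] at h
    exact zero_ne_one h
  · rw [div_eq_one_iff_eq hy] at h
    exact one_ne_zero (by linear_combination h : (1 : F) = 0)

lemma div_sub_one_div_sub_one {F : Type*} [Field F] {y : F} (hy : y ≠ 1) :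
    y / (y - 1) / (y / (y - 1) - 1) = y := by
  have hu : y - 1 ≠ 0 := sub_ne_zero.mpr hy
  field_simp
  ring

lemma P2_summand_kummer {F R : Type*} [Field F] [CommRing R] (A B C : MulChar F R)
    (lam : F) {y : F} (hy : y ≠ 1) :
    B y * (B⁻¹ * C) (1 - y) * A⁻¹ (1 - lam * y) =
      B (-1) * (B (y / (y - 1)) * (B⁻¹ * (A * B * C⁻¹)) (1 - y / (y - 1)) *
        A⁻¹ (1 - (1 - lam) * (y / (y - 1)))) := by
  have hu : y - 1 ≠ 0 := sub_ne_zero.mpr hy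
  set u := y - 1
  have hy' : y / u = y * u⁻¹ := div_eq_mul_inv y u
  have h1 : 1 - y / u = -1 * u⁻¹ := by field_simp; ring
  have h2 : 1 - (1 - lam) * (y / u) = -1 * u⁻¹ * (1 - lam * y) := by field_simp; ring
  have hchar : B⁻¹ * (A * B * C⁻¹) = A * C⁻¹ := by
    rw [mul_comm A B, mul_assoc, inv_mul_cancel_left]
  have hcancel : ∀ x, (A * C⁻¹) x * A⁻¹ x = C⁻¹ x := fun x => by
    rw [← MulChar.mul_apply, mul_comm A, mul_inv_cancel_right]
  have hrhs : B (y * u⁻¹) * (A * C⁻¹) (-1 * u⁻¹) * A⁻¹ (-1 * u⁻¹ * (1 - lam * y)) =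
      B y * B u⁻¹ * C⁻¹ (-1 * u⁻¹) * A⁻¹ (1 - lam * y) := by
    rw [map_mul B, map_mul A⁻¹, ← hcancel]
    ring
  have h1y : 1 - y = -1 * u := by ring
  rw [h1, h2, hy', hchar, hrhs, h1y]
  simp only [MulChar.mul_apply, map_mul, MulChar.inv_apply', inv_inv, inv_neg, inv_one]
  ring

lemma P2_eq_sum_erase_one {F : Type*} [Field F] [Fintype F] (A B C : MulChar F ℂ) (lam : F) :
    P2 A B C lam = ∑ y ∈ univ.erase 1, B y * (B⁻¹ * C) (1 - y) * A⁻¹ (1 - lam * y) := by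
  rw [P2, sum_erase]
  rw [sub_self, MulChar.map_zero, mul_zero, zero_mul]

theorem P2_kummer_general
    {F : Type*} [Field F] [Fintype F]
    (A B C : MulChar F ℂ) (lam : F) :
    P2 A B C lam = B (-1) * P2 A B (A * B * C⁻¹) (1 - lam) := by
  rw [P2_eq_sum_erase_one, P2_eq_sum_erase_one, mul_sum]
  have hmem : ∀ y ∈ univ.erase (1 : F), y / (y - 1) ∈ univ.erase 1 := fun y _ =>
    mem_erase.mpr ⟨div_sub_one_ne_one y, mem_univ _⟩
  have hinv : ∀ y ∈ univ.erase (1 : F), y / (y - 1) / (y / (y - 1) - 1) = y := fun y hy =>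
    div_sub_one_div_sub_one (ne_of_mem_erase hy)
  exact sum_nbij' (fun y => y / (y - 1)) (fun y => y / (y - 1)) hmem hmem hinv hinv
    fun y hy => P2_summand_kummer A B C lam (ne_of_mem_erase hy)

/-- Finite field Kummer relation:
`₂P₁[A,B;C;λ] = B(−1)·₂P₁[A,B;ABC⁻¹;1−λ]`. -/
theorem P2_kummer
    {F : Type*} [Field F] [Fintype F] [DecidableEq F]
    (A B C : MulChar F ℂ) (lam : F) :
    P2 A B C lam = B (-1) * P2 A B (A * B * C⁻¹) (1 - lam) :=
  P2_kummer_general A B C lam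
end

section
/- Let ₂P₁[A,B;C;λ] := Σ_{y∈F_q} B(y)·(B⁻¹C)(1−y)·A⁻¹(1−λy). For any multiplicative characters A,B,C of F_q and any λ ∈ F_q: ₂P₁[A,B;C;λ] = A⁻¹(1−λ)·₂P₁[A, B⁻¹C; C; λ/(λ−1)] + δ(1−λ)·J(B, C·A⁻¹·B⁻¹), where the first term on the right is interpreted as 0 when λ=1 (since A⁻¹(0)=0) and δ(1−λ)=1 iff λ=1. -/
open scoped Classical

/-- Finite field Pfaff transformation:
`₂P₁[A,B;C;λ] = A⁻¹(1−λ)·₂P₁[A,B⁻¹C;C;λ/(λ−1)] + δ(1−λ)·J(B,CA⁻¹B⁻¹)`. -/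
theorem P2_pfaff
    {F : Type*} [Field F] [Fintype F] [DecidableEq F]
    (A B C : MulChar F ℂ) (lam : F) :
    P2 A B C lam =
      A⁻¹ (1 - lam) * P2 A (B⁻¹ * C) C (lam / (lam - 1))
        + (if (1 : F) - lam = 0 then (1 : ℂ) else 0) * jacobiS B (C * A⁻¹ * B⁻¹) := by
  by_cases h : lam = 1
  · subst h
    rw [sub_self, if_pos rfl, one_mul,
      show A⁻¹ (0:F) = 0 from A⁻¹.map_nonunit not_isUnit_zero,
      zero_mul, zero_add]
    unfold P2 jacobiS
    refine Finset.sum_congr rfl fun y _ => ?_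
    simp only [MulChar.mul_apply, one_mul]
    ring
  · have h1 : lam - 1 ≠ 0 := sub_ne_zero.mpr h
    rw [if_neg (by simpa [sub_eq_zero] using fun e => h e.symm), zero_mul, add_zero]
    unfold P2
    rw [Finset.mul_sum]
    refine Fintype.sum_equiv (Equiv.subLeft (1:F)) _ _ fun y => ?_
    simp only [Equiv.subLeft_apply]
    have hBC : ((B⁻¹*C)⁻¹*C) = B := by
      rw [mul_inv_rev, inv_inv, mul_comm C⁻¹ B, mul_assoc, inv_mul_cancel, mul_one]
    have hA : A⁻¹ (1-lam) * A⁻¹ (1 - lam/(lam-1)*(1-y)) = A⁻¹ (1 - lam*y) := by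
      rw [← map_mul]
      congr 1
      field_simp
      ring
    rw [hBC, sub_sub_cancel, ← hA]
    ring
end

section
/- Let ₂P₁[A,B;C;λ] := Σ_{y∈F_q} B(y)·(B⁻¹C)(1−y)·A⁻¹(1−λy). For λ ∈ F_q, λ ≠ 0, and multiplicative characters B, C: ₂P₁[ε, B; C; λ] = J(B, B⁻¹C) − C⁻¹(λ)·(B⁻¹C)(λ−1), where ε is the trivial character (with ε(0)=0) and J is the Jacobi sum. -/
open scoped Classical

namespace MulChar

variable {F : Type*} [Field F]

lemma one_apply_eq_ite {R : Type*} [CommMonoidWithZero R] [Nontrivial R] (x : F) :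
    (1 : MulChar F R) x = if x = 0 then 0 else 1 := by
  split_ifs with hx
  · rw [hx, MulChar.map_zero]
  · exact one_apply (Ne.isUnit hx)

lemma sum_mul_one_apply_one_sub_mul {R : Type*} [CommRing R] [Fintype F] [DecidableEq F]
    (f : F → R) {lam : F} (hlam : lam ≠ 0) :
    ∑ y, f y * (1 : MulChar F R) (1 - lam * y) = ∑ y, f y - f lam⁻¹ := by
  nontriviality R
  have hvanish (y : F) : (1 - lam * y = 0 ↔ y = lam⁻¹) := by
    rw [sub_eq_zero, eq_comm, mul_eq_one_iff_inv_eq₀ hlam, eq_comm]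
  simp_rw [one_apply_eq_ite, hvanish]
  simp only [mul_ite, mul_zero, mul_one, Finset.sum_ite, Finset.sum_const_zero, zero_add,
    Finset.filter_ne', Finset.sum_erase_eq_sub (Finset.mem_univ _)]

lemma apply_inv_mul_apply_one_sub_inv {R : Type*} [CommGroupWithZero R] (χ ψ : MulChar F R)
    {lam : F} (hlam : lam ≠ 0) :
    χ lam⁻¹ * ψ (1 - lam⁻¹) = (χ * ψ)⁻¹ lam * ψ (lam - 1) := by
  have hsplit : 1 - lam⁻¹ = lam⁻¹ * (lam - 1) := by field_simp
  rw [hsplit, map_mul, inv_apply', ← mul_assoc, ← mul_apply]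

end MulChar

theorem P2_trivial_upper_general
    {F : Type*} [Field F] [Fintype F]
    (B C : MulChar F ℂ) (lam : F) (hlam : lam ≠ 0) :
    P2 1 B C lam = jacobiS B (B⁻¹ * C) - C⁻¹ lam * (B⁻¹ * C) (lam - 1) := by
  rw [P2, inv_one, MulChar.sum_mul_one_apply_one_sub_mul _ hlam,
    MulChar.apply_inv_mul_apply_one_sub_inv _ _ hlam, mul_inv_cancel_left, jacobiS]

/-- Imprimitive evaluation:
`₂P₁[ε,B;C;λ] = J(B,B⁻¹C) − C⁻¹(λ)·(B⁻¹C)(λ−1)` for `λ ≠ 0`. -/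
theorem P2_trivial_upper
    {F : Type*} [Field F] [Fintype F] [DecidableEq F]
    (B C : MulChar F ℂ) (lam : F) (hlam : lam ≠ 0) :
    P2 1 B C lam = jacobiS B (B⁻¹ * C) - C⁻¹ lam * (B⁻¹ * C) (lam - 1) :=
  P2_trivial_upper_general B C lam hlam
end

section
/- Let ₂P₁[A,B;C;λ] := Σ_{y∈F_q} B(y)·(B⁻¹C)(1−y)·A⁻¹(1−λy). For λ ∈ F_q, λ ≠ 0, and multiplicative characters A, B: ₂P₁[A, B; B; λ] = B⁻¹(λ)·J(B, A⁻¹) − A⁻¹(1−λ). -/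
open scoped Classical

/-- Imprimitive evaluation:
`₂P₁[A,B;B;λ] = B⁻¹(λ)·J(B,A⁻¹) − A⁻¹(1−λ)` for `λ ≠ 0`. -/
theorem P2_equal_lower
    {F : Type*} [Field F] [Fintype F] [DecidableEq F]
    (A B : MulChar F ℂ) (lam : F) (hlam : lam ≠ 0) :
    P2 A B B lam = B⁻¹ lam * jacobiS B A⁻¹ - A⁻¹ (1 - lam) := by
  unfold P2 jacobiS
  have key : ∀ y : F, B y * (B⁻¹ * B) (1 - y) * A⁻¹ (1 - lam * y)
      = B y * A⁻¹ (1 - lam * y) - (if y = 1 then B y * A⁻¹ (1 - lam * y) else 0) := by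
    intro y
    rw [inv_mul_cancel]
    by_cases hy : y = 1
    · have : (1 : F) - y = 0 := by rw [hy]; ring
      simp [hy, this, MulChar.map_zero]
    · have hne : (1 : F) - y ≠ 0 := sub_ne_zero.mpr (fun h => hy h.symm)
      rw [MulChar.one_apply (isUnit_iff_ne_zero.mpr hne)]
      simp [hy]
  rw [Finset.sum_congr rfl (fun y _ => key y), Finset.sum_sub_distrib,
    Finset.sum_ite_eq' Finset.univ (1 : F) (fun y => B y * A⁻¹ (1 - lam * y))]
  simp only [Finset.mem_univ, if_pos, map_one, one_mul, mul_one]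
  congr 1
  rw [Finset.mul_sum]
  have hB : B⁻¹ lam * B lam = 1 := by
    rw [← MulChar.mul_apply, MulChar.inv_mul, MulChar.one_apply (isUnit_iff_ne_zero.mpr hlam)]
  refine Fintype.sum_equiv (Equiv.mulLeft₀ lam hlam) _ _ (fun y => ?_)
  simp only [Equiv.mulLeft₀_apply]
  rw [map_mul, ← mul_assoc, ← mul_assoc, hB, one_mul]
end
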